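/- Let E be a finite directed graph without sinks in which every loop has an exit, let k ≥ 1, and let σ be a permutation of E^k preserving sources and ranges, with associated maps f_e as above. Then the following are equivalent: (i) [Condition (b)] there exists m ≥ 1 such that for every sequence e_1, …, e_m ∈ E¹, the composition f_{e_1} ∘ ⋯ ∘ f_{e_m} (with f_{e_m} applied first, defined wherever the composition makes sense) either has empty domain, or is defined on all of E^{k-1}_{*,r(e_m)} and its range consists of exactly one element; (ii) there exists a partial order ≤ on the set of pairs {(α, β) : α, β ∈ E^{k-1}, s(α) = s(β)} such that (a) the minimal elements of ≤ are exactly the diagonal pairs (α, α) together with all pairs (α, β) with s(α) = s(β) = v for vertices v receiving no edge, and (b) for every e ∈ E¹ and all α ≠ β in E^{k-1}_{*,r(e)}, one has (f_e(α), f_e(β)) < (α, β) (strict inequality). -/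

import Mathlib

/-!
(b) ⇒ order: let `q ≤ p` mean that some nonempty composition of the maps `f_e` sends the
off-diagonal pair `p` to `q` componentwise. A nonempty composition fixing two distinct paths
would, iterated past length `m`, contradict the singleton-range clause of Condition (b); this
gives antisymmetry and strict descent.

Order ⇒ (b), with `m` one more than the number of pairs: each `f_e` is total on
`E^{k-1}_{*,r(e)}`, so a composition with nonempty domain has full domain, and two distinct
images of it would end a strictly descending chain of `m + 1` pairs.
-/

structure FinDirGraph where
  V : Type
  E : Type
  [instFV : Fintype V]
  [instFE : Fintype E]
  [instDV : DecidableEq V]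
  [instDE : DecidableEq E]
  r : E → V
  s : E → V

attribute [instance] FinDirGraph.instFV FinDirGraph.instFE FinDirGraph.instDV FinDirGraph.instDE

namespace FinDirGraph

variable (G : FinDirGraph)

def IsPathFrom : G.V → List G.E → Prop
  | _, [] => True
  | v, e :: l => G.s e = v ∧ IsPathFrom (G.r e) l

def rangeFrom : G.V → List G.E → G.V
  | v, [] => v
  | _, e :: l => rangeFrom (G.r e) l

structure Path where
  src : G.V
  edges : List G.E
  ok : G.IsPathFrom src edges

variable {G}

def Path.len (μ : G.Path) : ℕ := μ.edges.length

def Path.rng (μ : G.Path) : G.V := G.rangeFrom μ.src μ.edges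

variable (G)

def NoSinks : Prop := ∀ v : G.V, ∃ e : G.E, G.s e = v

def NoSources : Prop := ∀ v : G.V, ∃ e : G.E, G.r e = v

def EveryLoopHasExit : Prop :=
  ∀ μ : G.Path, μ.edges ≠ [] → μ.src = μ.rng →
    ∃ e ∈ μ.edges, ∃ f g : G.E, f ≠ g ∧ G.s f = G.s e ∧ G.s g = G.s e

variable {G}

/-- Prepending an edge to a path. -/
def Path.cons (e : G.E) (μ : G.Path) (h : μ.src = G.r e) : G.Path :=
  ⟨G.s e, e :: μ.edges, ⟨rfl, h ▸ μ.ok⟩⟩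

lemma isPathFrom_snoc : ∀ (l : List G.E) (v : G.V) (g : G.E),
    G.IsPathFrom v l → G.s g = G.rangeFrom v l → G.IsPathFrom v (l ++ [g])
  | [], _, _, _, h => ⟨h, trivial⟩
  | e :: t, _, g, hp, h => ⟨hp.1, isPathFrom_snoc t (G.r e) g hp.2 h⟩

/-- Appending an edge to a path. -/
def Path.snoc (μ : G.Path) (g : G.E) (h : G.s g = μ.rng) : G.Path :=
  ⟨μ.src, μ.edges ++ [g], isPathFrom_snoc μ.edges μ.src g μ.ok h⟩

variable (G)

/-- The set `E^k` of paths of length `k`, as a type. -/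
def PathOfLen (k : ℕ) := {μ : G.Path // μ.len = k}

variable {G}

lemma len_cons_eq {k : ℕ} (hk : 1 ≤ k) {e : G.E} {α : G.Path}
    (hlen : α.len = k - 1) (hsrc : α.src = G.r e) : (Path.cons e α hsrc).len = k := by
  simp only [Path.len, Path.cons, List.length_cons] at *
  omega

/-- The relational graph of the map `f_e : E^{k-1}_{*,r(e)} → E^{k-1}_{*,s(e)}`,
`f_e(α) = β` iff `σ(eα) = βg` for some edge `g`. -/
def FRel {k : ℕ} (hk : 1 ≤ k) (σ : Equiv.Perm (PathOfLen G k)) (e : G.E)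
    (α β : G.Path) : Prop :=
  β.len = k - 1 ∧
    ∃ (hlen : α.len = k - 1) (hsrc : α.src = G.r e) (g : G.E) (hg : G.s g = β.rng),
      (σ ⟨Path.cons e α hsrc, len_cons_eq hk hlen hsrc⟩).val = Path.snoc β g hg

/-- The relational graph of the composition `f_{e₁} ∘ ⋯ ∘ f_{e_m}` (with `f_{e_m}`
applied first), for the list `[e₁, …, e_m]`. -/
def FRelComp {k : ℕ} (hk : 1 ≤ k) (σ : Equiv.Perm (PathOfLen G k)) :
    List G.E → G.Path → G.Path → Prop
  | [], α, β => α = β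
  | e :: t, α, β => ∃ γ, FRelComp hk σ t α γ ∧ FRel hk σ e γ β

/-- Condition (b): some length `m` such that every `m`-fold composition of
the maps `f_e` has empty domain, or full domain and singleton range. -/
def ConditionB {k : ℕ} (hk : 1 ≤ k) (σ : Equiv.Perm (PathOfLen G k)) : Prop :=
  ∃ m : ℕ, 1 ≤ m ∧ ∀ es : List G.E, es.length = m → ∀ elast, es.getLast? = some elast →
    ((∀ α β, ¬ FRelComp hk σ es α β) ∨
      ((∀ α : G.Path, α.len = k - 1 → α.src = G.r elast → ∃ β, FRelComp hk σ es α β) ∧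
        (∃ β₀, ∀ α β, FRelComp hk σ es α β → β = β₀)))

/-- The relational graph of the partial map `f_{e,g}` on pairs of distinct paths. -/
def FRel2 {k : ℕ} (hk : 1 ≤ k) (σ : Equiv.Perm (PathOfLen G k)) (e g : G.E)
    (p q : G.Path × G.Path) : Prop :=
  p.1 ≠ p.2 ∧ q.1 ≠ q.2 ∧
    ∃ (h1 : p.1.len = k - 1) (h2 : p.2.len = k - 1)
      (hs1 : p.1.src = G.r e) (hs2 : p.2.src = G.r g)
      (h : G.E) (hg1 : G.s h = q.1.rng) (hg2 : G.s h = q.2.rng),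
      (σ ⟨Path.cons e p.1 hs1, len_cons_eq hk h1 hs1⟩).val = Path.snoc q.1 h hg1 ∧
      (σ ⟨Path.cons g p.2 hs2, len_cons_eq hk h2 hs2⟩).val = Path.snoc q.2 h hg2

/-- The relational graph of the composition `f_{e₁,g₁} ∘ ⋯ ∘ f_{e_m,g_m}`. -/
def FRel2Comp {k : ℕ} (hk : 1 ≤ k) (σ : Equiv.Perm (PathOfLen G k)) :
    List (G.E × G.E) → G.Path × G.Path → G.Path × G.Path → Prop
  | [], p, q => p = q
  | eg :: t, p, q => ∃ o, FRel2Comp hk σ t p o ∧ FRel2 hk σ eg.1 eg.2 o q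

/-- Condition (d): some length `m` such that every `m`-fold composition of the
partial maps `f_{e,g}` has empty domain. -/
def ConditionD {k : ℕ} (hk : 1 ≤ k) (σ : Equiv.Perm (PathOfLen G k)) : Prop :=
  ∃ m : ℕ, 1 ≤ m ∧ ∀ L : List (G.E × G.E), L.length = m →
    ∀ p q, ¬ FRel2Comp hk σ L p q

variable (G)

/-- Pairs of paths of length `k-1` with a common source. -/
def PairB (k : ℕ) :=
  {p : G.Path × G.Path // p.1.len = k - 1 ∧ p.2.len = k - 1 ∧ p.1.src = p.2.src}

/-- `Ψ`: pairs of distinct paths of length `k-1`. -/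
def PairD (k : ℕ) :=
  {p : G.Path × G.Path // p.1.len = k - 1 ∧ p.2.len = k - 1 ∧ p.1 ≠ p.2}

attribute [ext] Path

variable {G}

lemma isPathFrom_of_snoc : ∀ (l : List G.E) (v : G.V) (g : G.E),
    G.IsPathFrom v (l ++ [g]) → G.IsPathFrom v l ∧ G.s g = G.rangeFrom v l
  | [], _, _, h => ⟨trivial, h.1⟩
  | e :: t, _, g, h =>
    have ih := isPathFrom_of_snoc t (G.r e) g h.2
    ⟨⟨h.1, ih.1⟩, ih.2⟩

instance (n : ℕ) : Finite (PathOfLen G n) :=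
  Finite.of_injective (β := G.V × List.Vector G.E n)
    (fun μ : PathOfLen G n => (μ.val.src, (⟨μ.val.edges, μ.prop⟩ : List.Vector G.E n)))
    fun _ _ h => Subtype.ext (Path.ext (congrArg (·.1) h) (congrArg (·.2.toList) h))

instance (k : ℕ) : Finite (PairB G k) :=
  Finite.of_injective (β := PathOfLen G (k - 1) × PathOfLen G (k - 1))
    (fun p : PairB G k =>
      ((⟨p.val.1, p.prop.1⟩ : PathOfLen G (k - 1)),
        (⟨p.val.2, p.prop.2.1⟩ : PathOfLen G (k - 1))))
    fun _ _ h => Subtype.ext (Prod.ext (congrArg (·.1.val) h) (congrArg (·.2.val) h))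

lemma ncard_setOf_rel_lt_of_rel {α : Type*} [Finite α] {r : α → α → Prop}
    [IsPartialOrder α r] {a b : α} (hab : r a b) (hne : a ≠ b) :
    {y | r b y}.ncard < {y | r a y}.ncard :=
  Set.ncard_lt_ncard <| LE.le.ssubset_of_mem_notMem (fun _ hy => _root_.trans hab hy)
    (refl a) fun hba => hne (antisymm hab hba)

section Maps

variable {k : ℕ} {hk : 1 ≤ k} {σ : Equiv.Perm (PathOfLen G k)}

theorem FRel.unique {e : G.E} {α β β' : G.Path} (h : FRel hk σ e α β)
    (h' : FRel hk σ e α β') : β = β' := by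
  obtain ⟨hβ, _, _, g, hg, hσ⟩ := h
  obtain ⟨hβ', _, _, g', hg', hσ'⟩ := h'
  have hsnoc : Path.snoc β g hg = Path.snoc β' g' hg' := hσ.symm.trans hσ'
  rw [Path.ext_iff] at hsnoc
  exact Path.ext hsnoc.1 (List.append_inj hsnoc.2 (hβ.trans hβ'.symm)).1

theorem FRel.src_eq (hσs : ∀ μ, (σ μ).val.src = μ.val.src) {e : G.E} {α β : G.Path}
    (h : FRel hk σ e α β) : β.src = G.s e := by
  obtain ⟨-, hlen, hsrc, g, hg, hσ⟩ := h
  have hσsrc := hσs ⟨Path.cons e α hsrc, len_cons_eq hk hlen hsrc⟩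
  rwa [hσ] at hσsrc

theorem FRel.pairB_prop (hσs : ∀ μ, (σ μ).val.src = μ.val.src) {e : G.E}
    {α α' β β' : G.Path} (h : FRel hk σ e α β) (h' : FRel hk σ e α' β') :
    β.len = k - 1 ∧ β'.len = k - 1 ∧ β.src = β'.src :=
  ⟨h.1, h'.1, (h.src_eq hσs).trans (h'.src_eq hσs).symm⟩

variable (hk) in
theorem exists_fRel {e : G.E} {α : G.Path}
    (hlen : α.len = k - 1) (hsrc : α.src = G.r e) : ∃ β, FRel hk σ e α β := by
  set μ := σ ⟨Path.cons e α hsrc, len_cons_eq hk hlen hsrc⟩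
  have hlenμ : μ.val.edges.length = k := μ.prop
  obtain ⟨l, g, hlg⟩ : ∃ l g, μ.val.edges = l ++ [g] :=
    (List.eq_nil_or_concat' μ.val.edges).resolve_left fun hnil => by
      rw [hnil, List.length_nil] at hlenμ
      omega
  obtain ⟨hl, hg⟩ := isPathFrom_of_snoc l μ.val.src g (hlg ▸ μ.val.ok)
  refine ⟨⟨μ.val.src, l, hl⟩, ?_, hlen, hsrc, g, hg, Path.ext rfl hlg⟩
  rw [hlg, List.length_append, List.length_singleton] at hlenμ
  exact (Nat.sub_eq_of_eq_add hlenμ.symm).symm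

theorem fRelComp_append {α β : G.Path} (L₁ L₂ : List G.E) :
    FRelComp hk σ (L₁ ++ L₂) α β ↔ ∃ γ, FRelComp hk σ L₂ α γ ∧ FRelComp hk σ L₁ γ β := by
  induction L₁ generalizing β with
  | nil => exact ⟨fun h => ⟨β, h, rfl⟩, fun ⟨_, h, hγ⟩ => hγ ▸ h⟩
  | cons e t ih =>
    simp only [List.cons_append, FRelComp, ih]
    exact ⟨fun ⟨δ, ⟨γ, h₂, h₁⟩, he⟩ => ⟨γ, h₂, δ, h₁, he⟩,
      fun ⟨γ, h₂, δ, h₁, he⟩ => ⟨δ, ⟨γ, h₂, h₁⟩, he⟩⟩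

theorem FRelComp.len_src {es : List G.E} {elast : G.E} {α β : G.Path}
    (h : FRelComp hk σ es α β) (hlast : es.getLast? = some elast) :
    α.len = k - 1 ∧ α.src = G.r elast := by
  obtain ⟨init, rfl⟩ := List.getLast?_eq_some_iff.mp hlast
  obtain ⟨γ, ⟨α', rfl, hrel⟩, -⟩ := (fRelComp_append init [elast]).mp h
  exact ⟨hrel.2.1, hrel.2.2.1⟩

theorem FRelComp.exists_of_src_eq (hσs : ∀ μ, (σ μ).val.src = μ.val.src) {es : List G.E}
    {α β α' : G.Path} (h : FRelComp hk σ es α β) (hlen : α'.len = k - 1)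
    (hsrc : α'.src = α.src) :
    ∃ β', FRelComp hk σ es α' β' ∧ β'.len = k - 1 ∧ β'.src = β.src := by
  induction es generalizing β with
  | nil => exact ⟨α', rfl, hlen, h ▸ hsrc⟩
  | cons e t ih =>
    obtain ⟨γ, hγ, hrel⟩ := h
    obtain ⟨γ', hγ', hγlen, hγsrc⟩ := ih hγ
    obtain ⟨β', hβ'⟩ := exists_fRel hk hγlen (hγsrc.trans hrel.2.2.1)
    exact ⟨β', ⟨γ', hγ', hβ'⟩, (hβ'.pairB_prop hσs hrel).1, (hβ'.pairB_prop hσs hrel).2.2⟩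

theorem fRelComp_flatten_replicate {L : List G.E} {α : G.Path} (h : FRelComp hk σ L α α) :
    ∀ n, FRelComp hk σ (List.replicate n L).flatten α α
  | 0 => rfl
  | n + 1 => by
    rw [List.replicate_succ, List.flatten_cons, fRelComp_append]
    exact ⟨α, fRelComp_flatten_replicate h n, h⟩

-- Iterate the cycle past length `m`: its last `m` maps form a composition whose range contains
-- both `α` and `β`.
theorem ConditionB.eq_of_cycle (hcb : ConditionB hk σ) {L : List G.E} (hL : L ≠ [])
    {α β : G.Path} (hα : FRelComp hk σ L α α) (hβ : FRelComp hk σ L β β) : α = β := by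
  obtain ⟨m, hm, hB⟩ := hcb
  set M := (List.replicate m L).flatten
  have hM : m ≤ M.length := by
    simp only [M, List.length_flatten, List.map_replicate, List.sum_replicate, smul_eq_mul]
    exact Nat.le_mul_of_pos_right m (List.length_pos_iff.mpr hL)
  have hes : (M.take m).length = m := List.length_take_of_le hM
  have hne : M.take m ≠ [] := List.ne_nil_of_length_pos (by omega)
  have hsplit {γ : G.Path} (h : FRelComp hk σ L γ γ) : ∃ δ, FRelComp hk σ (M.take m) δ γ := by
    have := fRelComp_flatten_replicate h m
    rw [← List.take_append_drop m (List.replicate m L).flatten, fRelComp_append] at this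
    exact this.imp fun _ h => h.2
  obtain ⟨δ, hδ⟩ := hsplit hα
  obtain ⟨δ', hδ'⟩ := hsplit hβ
  rcases hB _ hes _ (List.getLast?_eq_some_getLast hne) with hempty | ⟨-, β₀, hβ₀⟩
  · exact (hempty δ α hδ).elim
  · exact (hβ₀ δ α hδ).trans (hβ₀ δ' β hδ').symm

variable (hk σ) in
-- Only off-diagonal pairs descend, so that the diagonal pairs stay minimal.
def DescLE (q p : PairB G k) : Prop :=
  q = p ∨ p.val.1 ≠ p.val.2 ∧ ∃ L ≠ [], FRelComp hk σ L p.val.1 q.val.1 ∧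
    FRelComp hk σ L p.val.2 q.val.2

theorem descLE_isPartialOrder (hcb : ConditionB hk σ) :
    IsPartialOrder (PairB G k) (DescLE hk σ) where
  refl _ := Or.inl rfl
  trans a b c := by
    rintro (rfl | ⟨hb, L, hL, h₁, h₂⟩) (rfl | ⟨hc, L', hL', h₁', h₂'⟩)
    · exact Or.inl rfl
    · exact Or.inr ⟨hc, L', hL', h₁', h₂'⟩
    · exact Or.inr ⟨hb, L, hL, h₁, h₂⟩
    · refine Or.inr ⟨hc, L ++ L', by simp [hL], ?_, ?_⟩
      · exact (fRelComp_append L L').mpr ⟨_, h₁', h₁⟩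
      · exact (fRelComp_append L L').mpr ⟨_, h₂', h₂⟩
  antisymm a b := by
    rintro (rfl | ⟨-, L, hL, h₁, h₂⟩) hba
    · rfl
    rcases hba with rfl | ⟨ha, L', -, h₁', h₂'⟩
    · rfl
    · exact (ha (hcb.eq_of_cycle (L := L ++ L') (by simp [hL])
        ((fRelComp_append L L').mpr ⟨_, h₁', h₁⟩) ((fRelComp_append L L').mpr ⟨_, h₂', h₂⟩))).elim

theorem descLE_of_fRel (hcb : ConditionB hk σ) {e : G.E} {p q : PairB G k}
    (hp : p.val.1 ≠ p.val.2) (h₁ : FRel hk σ e p.val.1 q.val.1) (h₂ : FRel hk σ e p.val.2 q.val.2) :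
    DescLE hk σ q p ∧ q ≠ p := by
  refine ⟨Or.inr ⟨hp, [e], List.cons_ne_nil e [], ⟨_, rfl, h₁⟩, ⟨_, rfl, h₂⟩⟩, ?_⟩
  rintro rfl
  exact hp (hcb.eq_of_cycle (List.cons_ne_nil e []) ⟨_, rfl, h₁⟩ ⟨_, rfl, h₂⟩)

theorem descLE_minimal_iff (hσs : ∀ μ, (σ μ).val.src = μ.val.src) (hcb : ConditionB hk σ)
    (p : PairB G k) :
    (∀ q, DescLE hk σ q p → q = p) ↔ (p.val.1 = p.val.2 ∨ ¬∃ e : G.E, G.r e = p.val.1.src) := by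
  constructor
  · intro hmin
    by_contra! hcon
    obtain ⟨hp, e, he⟩ := hcon
    obtain ⟨β, hβ⟩ := exists_fRel hk p.prop.1 he.symm
    obtain ⟨β', hβ'⟩ := exists_fRel hk p.prop.2.1 (p.prop.2.2.symm.trans he.symm)
    have hlt := descLE_of_fRel (q := ⟨(β, β'), hβ.pairB_prop hσs hβ'⟩) hcb hp hβ hβ'
    exact hlt.2 (hmin _ hlt.1)
  · rintro (hdiag | hsrc) q (rfl | ⟨hp, L, hL, h₁, -⟩)
    · rfl
    · exact (hp hdiag).elim
    · rfl
    · exact (hsrc ⟨_, (h₁.len_src (List.getLast?_eq_some_getLast hL)).2.symm⟩).elim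

theorem FRelComp.eq_or_length_le (hσs : ∀ μ, (σ μ).val.src = μ.val.src) (f : PairB G k → ℕ)
    (hf : ∀ (e : G.E) (p q : PairB G k), p.val.1 ≠ p.val.2 →
      FRel hk σ e p.val.1 q.val.1 → FRel hk σ e p.val.2 q.val.2 → f p < f q)
    {es : List G.E} (p : PairB G k) {β β' : G.Path}
    (h : FRelComp hk σ es p.val.1 β) (h' : FRelComp hk σ es p.val.2 β') :
    β = β' ∨ ∃ q : PairB G k, q.val = (β, β') ∧ es.length ≤ f q := by
  induction es generalizing β β' with
  | nil => exact Or.inr ⟨p, h ▸ h' ▸ rfl, Nat.zero_le _⟩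
  | cons e t ih =>
    obtain ⟨γ, hγ, hrel⟩ := h
    obtain ⟨γ', hγ', hrel'⟩ := h'
    rcases ih hγ hγ' with rfl | ⟨q, hq, hlen⟩
    · exact Or.inl (hrel.unique hrel')
    · obtain ⟨⟨γ, γ'⟩, hγγ'⟩ := q
      simp only [Prod.mk.injEq] at hq
      obtain ⟨rfl, rfl⟩ := hq
      by_cases hne : γ = γ'
      · exact Or.inl ((hne ▸ hrel).unique hrel')
      · refine Or.inr ⟨⟨(β, β'), hrel.pairB_prop hσs hrel'⟩, rfl, ?_⟩
        have := hf e ⟨(γ, γ'), hγγ'⟩ ⟨(β, β'), hrel.pairB_prop hσs hrel'⟩ hne hrel hrel'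
        simp only [List.length_cons]
        omega

theorem conditionB_of_isPartialOrder (hσs : ∀ μ, (σ μ).val.src = μ.val.src)
    (le : PairB G k → PairB G k → Prop) [IsPartialOrder (PairB G k) le]
    (hdec : ∀ (e : G.E) (p q : PairB G k), p.val.1 ≠ p.val.2 →
      FRel hk σ e p.val.1 q.val.1 → FRel hk σ e p.val.2 q.val.2 → le q p ∧ q ≠ p) :
    ConditionB hk σ := by
  refine ⟨Nat.card (PairB G k) + 1, Nat.le_add_left 1 _, fun es hlen elast hlast => ?_⟩
  by_cases hempty : ∀ α β, ¬FRelComp hk σ es α β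
  · exact Or.inl hempty
  simp only [not_forall, not_not] at hempty
  obtain ⟨α₀, β₀, h₀⟩ := hempty
  have hα₀ := h₀.len_src hlast
  refine Or.inr ⟨fun α hαlen hαsrc => ?_, β₀, fun α β h => ?_⟩
  · obtain ⟨β, hβ, -⟩ := h₀.exists_of_src_eq hσs hαlen (hαsrc.trans hα₀.2.symm)
    exact ⟨β, hβ⟩
  · have hα := h.len_src hlast
    have hchain := h.eq_or_length_le (p := ⟨(α, α₀), hα.1, hα₀.1, hα.2.trans hα₀.2.symm⟩) hσs
      (fun q => {y | le q y}.ncard)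
      (fun e p q hp h₁ h₂ => ncard_setOf_rel_lt_of_rel (hdec e p q hp h₁ h₂).1
        (hdec e p q hp h₁ h₂).2) h₀
    rcases hchain with heq | ⟨q, -, hq⟩
    · exact heq
    · have := Set.ncard_le_card {y | le q y}
      omega

end Maps

end FinDirGraph

open FinDirGraph in
theorem stmt_16_general (G : FinDirGraph)
    (k : ℕ) (hk : 1 ≤ k) (σ : Equiv.Perm (PathOfLen G k))
    (hσs : ∀ μ, (σ μ).val.src = μ.val.src) :
    ConditionB hk σ ↔
      ∃ le : PairB G k → PairB G k → Prop, IsPartialOrder (PairB G k) le ∧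
        -- minimal elements are exactly the diagonal pairs and the pairs based at a
        -- vertex receiving no edge
        (∀ p : PairB G k, (∀ q, le q p → q = p) ↔
          (p.val.1 = p.val.2 ∨ ¬∃ e : G.E, G.r e = p.val.1.src)) ∧
        -- (f_e(α), f_e(β)) < (α, β) for α ≠ β in the domain of f_e
        (∀ (e : G.E) (p q : PairB G k), p.val.1 ≠ p.val.2 →
          FRel hk σ e p.val.1 q.val.1 → FRel hk σ e p.val.2 q.val.2 →
          le q p ∧ q ≠ p) :=
  ⟨fun hcb => ⟨DescLE hk σ, descLE_isPartialOrder hcb, descLE_minimal_iff hσs hcb,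
      fun _ _ _ => descLE_of_fRel hcb⟩,
    fun ⟨le, _, _, hdec⟩ => conditionB_of_isPartialOrder hσs le hdec⟩

open FinDirGraph in
/-- Lemma 6.1 (conditionb). -/
theorem stmt_16 (G : FinDirGraph) (hns : G.NoSinks) (hle : G.EveryLoopHasExit)
    (k : ℕ) (hk : 1 ≤ k) (σ : Equiv.Perm (PathOfLen G k))
    (hσs : ∀ μ, (σ μ).val.src = μ.val.src) (hσr : ∀ μ, (σ μ).val.rng = μ.val.rng) :
    ConditionB hk σ ↔
      ∃ le : PairB G k → PairB G k → Prop, IsPartialOrder (PairB G k) le ∧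
        -- minimal elements are exactly the diagonal pairs and the pairs based at a
        -- vertex receiving no edge
        (∀ p : PairB G k, (∀ q, le q p → q = p) ↔
          (p.val.1 = p.val.2 ∨ ¬∃ e : G.E, G.r e = p.val.1.src)) ∧
        -- (f_e(α), f_e(β)) < (α, β) for α ≠ β in the domain of f_e
        (∀ (e : G.E) (p q : PairB G k), p.val.1 ≠ p.val.2 →
          FRel hk σ e p.val.1 q.val.1 → FRel hk σ e p.val.2 q.val.2 →
          le q p ∧ q ≠ p) :=
  stmt_16_general G k hk σ hσs
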